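/- arXiv:1403.7916 — 2 statements merged into one kernel-verified Lean document; each statement's English description precedes it below -/
import Mathlib

section
/- Existence of the Kyle graph: let s = (a_1, …, a_l) be an ordered string with k = max{a_1, …, a_l} ≥ 1, and let n = 2k + 1. Then in O_{2k+1}(s): (i) the central vertex v_{k+1} has degree d(v_{k+1}) = 2 Σ_{t=1}^{l} a_t; (ii) every vertex i satisfies d(v_i) ≤ 2 Σ_{t=1}^{l} a_t, with equality if and only if i = k + 1; and (iii) for every m < 2k + 1 and every vertex i of O_m(s), d_{O_m(s)}(v_i) < 2 Σ_{t=1}^{l} a_t. Hence O_{2k+1}(s) is the smallest ornated graph for s attaining the maximum possible degree 2 Σ_{t=1}^{l} a_t, and it attains it at a single vertex. -/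
/-- Arc multiset of the ornated graph `O_n(s)` on vertex set `{1, …, n}`:
for each entry of the ordered string `s` at 1-based odd index `t` (0-based even
position `t-1`) with value `a`, one arc `(i, j)` for every `1 ≤ i < j ≤ n` with
`j ≤ i + a`; for each entry at 1-based even index (0-based odd position) with
value `a`, one arc `(i, j)` for every `n ≥ i > j ≥ 1` with `i ≤ j + a`.
Arcs arising from different entries are counted with multiplicity. -/
def ornArcs (s : List ℕ) (n : ℕ) : Multiset (ℕ × ℕ) :=
  ((List.range s.length).map (fun t =>
    ((Finset.Icc 1 n ×ˢ Finset.Icc 1 n).filter (fun p =>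
      (t % 2 = 0 ∧ p.1 < p.2 ∧ p.2 ≤ p.1 + s.getD t 0) ∨
      (t % 2 = 1 ∧ p.2 < p.1 ∧ p.1 ≤ p.2 + s.getD t 0))).val)).sum

/-- Degree of vertex `i` in the underlying multigraph of `O_n(s)`:
the number of arcs incident with `i`, counted with multiplicity. -/
def ornDeg (s : List ℕ) (n i : ℕ) : ℕ :=
  Multiset.card ((ornArcs s n).filter (fun p => p.1 = i)) +
  Multiset.card ((ornArcs s n).filter (fun p => p.2 = i))

private lemma card_filter_listsum {α β : Type*} (l : List α) (f : α → Multiset β)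
    (p : β → Prop) [DecidablePred p] :
    Multiset.card (((l.map f).sum).filter p)
      = (l.map (fun t => Multiset.card ((f t).filter p))).sum := by
  induction l with
  | nil => simp
  | cons a l ih => simp [Multiset.filter_add, ih]

private lemma map_sum_add (l : List ℕ) (f g : ℕ → ℕ) :
    (l.map f).sum + (l.map g).sum = (l.map (fun x => f x + g x)).sum := by
  induction l with
  | nil => simp
  | cons a l ih => simp [← ih]; ring

private lemma range_map_getD (s : List ℕ) (f : ℕ → ℕ) :
    ((List.range s.length).map (fun t => f (s.getD t 0))).sum = (s.map f).sum := by
  induction s with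
  | nil => simp
  | cons a s ih =>
    rw [List.length_cons, List.range_succ_eq_map]
    simp only [List.map_cons, List.map_map, List.sum_cons, Function.comp_def,
      List.getD_cons_zero, List.getD_cons_succ]
    rw [ih]

private lemma card_fst_eq (n i : ℕ) (h1 : 1 ≤ i) (h2 : i ≤ n)
    (q : ℕ → Prop) [DecidablePred q] :
    ((Finset.Icc 1 n ×ˢ Finset.Icc 1 n).filter (fun p => p.1 = i ∧ q p.2)).card
      = ((Finset.Icc 1 n).filter q).card := by
  rw [Finset.filter_product (fun x => x = i) q, Finset.card_product, Finset.filter_eq',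
    if_pos (by simp; omega)]
  simp

private lemma card_snd_eq (n i : ℕ) (h1 : 1 ≤ i) (h2 : i ≤ n)
    (q : ℕ → Prop) [DecidablePred q] :
    ((Finset.Icc 1 n ×ˢ Finset.Icc 1 n).filter (fun p => q p.1 ∧ p.2 = i)).card
      = ((Finset.Icc 1 n).filter q).card := by
  rw [Finset.filter_product q (fun x => x = i), Finset.card_product, Finset.filter_eq',
    if_pos (by simp; omega)]
  simp

private lemma cnt_up (n i a : ℕ) (h2 : i ≤ n) :
    ((Finset.Icc 1 n).filter (fun j => i < j ∧ j ≤ i + a)).card = min a (n - i) := by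
  have h : (Finset.Icc 1 n).filter (fun j => i < j ∧ j ≤ i + a)
      = Finset.Ioc i (min (i + a) n) := by
    ext j; simp; omega
  rw [h, Nat.card_Ioc]; omega

private lemma cnt_dn (n i a : ℕ) (h1 : 1 ≤ i) (h2 : i ≤ n) :
    ((Finset.Icc 1 n).filter (fun j => j < i ∧ i ≤ j + a)).card = min a (i - 1) := by
  have h : (Finset.Icc 1 n).filter (fun j => j < i ∧ i ≤ j + a)
      = Finset.Ico (max 1 (i - a)) i := by
    ext j; simp; omega
  rw [h, Nat.card_Ico]; omega

private lemma ornDeg_eq (s : List ℕ) (n i : ℕ) (h1 : 1 ≤ i) (h2 : i ≤ n) :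
    ornDeg s n i = (s.map (fun a => min a (n - i) + min a (i - 1))).sum := by
  unfold ornDeg ornArcs
  rw [card_filter_listsum, card_filter_listsum, map_sum_add,
    ← range_map_getD s (fun a => min a (n - i) + min a (i - 1))]
  congr 1
  apply List.map_congr_left
  intro t _
  set a := s.getD t 0 with ha
  rw [← Finset.filter_val, ← Finset.filter_val]
  show (Finset.filter _ _).card + (Finset.filter _ _).card = _
  rw [Finset.filter_filter, Finset.filter_filter]
  rcases Nat.mod_two_eq_zero_or_one t with ht | ht
  · have e1 : ((Finset.Icc 1 n ×ˢ Finset.Icc 1 n).filter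
        (fun p => ((t % 2 = 0 ∧ p.1 < p.2 ∧ p.2 ≤ p.1 + a) ∨
          (t % 2 = 1 ∧ p.2 < p.1 ∧ p.1 ≤ p.2 + a)) ∧ p.1 = i))
        = ((Finset.Icc 1 n ×ˢ Finset.Icc 1 n).filter
            (fun p => p.1 = i ∧ i < p.2 ∧ p.2 ≤ i + a)) := by
      apply Finset.filter_congr; intro p _; simp [ht]; omega
    have e2 : ((Finset.Icc 1 n ×ˢ Finset.Icc 1 n).filter
        (fun p => ((t % 2 = 0 ∧ p.1 < p.2 ∧ p.2 ≤ p.1 + a) ∨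
          (t % 2 = 1 ∧ p.2 < p.1 ∧ p.1 ≤ p.2 + a)) ∧ p.2 = i))
        = ((Finset.Icc 1 n ×ˢ Finset.Icc 1 n).filter
            (fun p => (p.1 < i ∧ i ≤ p.1 + a) ∧ p.2 = i)) := by
      apply Finset.filter_congr; intro p _; simp [ht]; omega
    rw [e1, e2, card_fst_eq n i h1 h2 (fun j => i < j ∧ j ≤ i + a),
      card_snd_eq n i h1 h2 (fun j => j < i ∧ i ≤ j + a), cnt_up n i a h2,
      cnt_dn n i a h1 h2]
  · have e1 : ((Finset.Icc 1 n ×ˢ Finset.Icc 1 n).filter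
        (fun p => ((t % 2 = 0 ∧ p.1 < p.2 ∧ p.2 ≤ p.1 + a) ∨
          (t % 2 = 1 ∧ p.2 < p.1 ∧ p.1 ≤ p.2 + a)) ∧ p.1 = i))
        = ((Finset.Icc 1 n ×ˢ Finset.Icc 1 n).filter
            (fun p => p.1 = i ∧ p.2 < i ∧ i ≤ p.2 + a)) := by
      apply Finset.filter_congr; intro p _; simp [ht]; omega
    have e2 : ((Finset.Icc 1 n ×ˢ Finset.Icc 1 n).filter
        (fun p => ((t % 2 = 0 ∧ p.1 < p.2 ∧ p.2 ≤ p.1 + a) ∨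
          (t % 2 = 1 ∧ p.2 < p.1 ∧ p.1 ≤ p.2 + a)) ∧ p.2 = i))
        = ((Finset.Icc 1 n ×ˢ Finset.Icc 1 n).filter
            (fun p => (i < p.1 ∧ p.1 ≤ i + a) ∧ p.2 = i)) := by
      apply Finset.filter_congr; intro p _; simp [ht]; omega
    rw [e1, e2, card_fst_eq n i h1 h2 (fun j => j < i ∧ i ≤ j + a),
      card_snd_eq n i h1 h2 (fun j => i < j ∧ j ≤ i + a), cnt_dn n i a h1 h2,
      cnt_up n i a h2]
    omega

private lemma map_sum_le (l : List ℕ) (f g : ℕ → ℕ) (h : ∀ a ∈ l, f a ≤ g a) :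
    (l.map f).sum ≤ (l.map g).sum := by
  induction l with
  | nil => simp
  | cons a l ih =>
    simp only [List.map_cons, List.sum_cons]
    exact Nat.add_le_add (h a (by simp)) (ih (fun b hb => h b (by simp [hb])))

private lemma map_sum_lt (l : List ℕ) (f g : ℕ → ℕ) (h : ∀ a ∈ l, f a ≤ g a)
    (k : ℕ) (hk : k ∈ l) (hlt : f k < g k) : (l.map f).sum < (l.map g).sum := by
  induction l with
  | nil => simp at hk
  | cons a l ih =>
    simp only [List.map_cons, List.sum_cons]
    rcases List.mem_cons.mp hk with rfl | hk'
    · exact Nat.add_lt_add_of_lt_of_le hlt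
        (map_sum_le l f g (fun b hb => h b (by simp [hb])))
    · exact Nat.add_lt_add_of_le_of_lt (h a (by simp))
        (ih (fun b hb => h b (by simp [hb])) hk')

private lemma two_sum (l : List ℕ) : (l.map (fun a => 2 * a)).sum = 2 * l.sum := by
  induction l with
  | nil => simp
  | cons a l ih => simp [ih]; ring

/-- Existence of the Kyle graph: for `k = max` entry of `s` (with `k ≥ 1`), in
`O_{2k+1}(s)` the central vertex `v_{k+1}` attains degree `2 Σ_t a_t`, every other
vertex has strictly smaller degree, and every ornated graph `O_m(s)` with `m < 2k+1`
has all degrees strictly below `2 Σ_t a_t`. -/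
theorem kyle_graph_exists (s : List ℕ) (k : ℕ) (hk : k ∈ s) (hmax : ∀ a ∈ s, a ≤ k)
    (hk1 : 1 ≤ k) :
    ornDeg s (2 * k + 1) (k + 1) = 2 * s.sum ∧
    (∀ i, 1 ≤ i → i ≤ 2 * k + 1 →
      ornDeg s (2 * k + 1) i ≤ 2 * s.sum ∧
      (ornDeg s (2 * k + 1) i = 2 * s.sum ↔ i = k + 1)) ∧
    (∀ m, m < 2 * k + 1 → ∀ i, 1 ≤ i → i ≤ m → ornDeg s m i < 2 * s.sum) := by
  have hcen : ornDeg s (2 * k + 1) (k + 1) = 2 * s.sum := by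
    rw [ornDeg_eq s (2 * k + 1) (k + 1) (by omega) (by omega), ← two_sum s]
    congr 1
    apply List.map_congr_left
    intro a ha
    have := hmax a ha
    omega
  refine ⟨hcen, ?_, ?_⟩
  · intro i hi1 hi2
    by_cases h : i = k + 1
    · subst h; exact ⟨hcen.le, by simp [hcen]⟩
    · have hlt : ornDeg s (2 * k + 1) i < 2 * s.sum := by
        rw [ornDeg_eq s (2 * k + 1) i hi1 hi2, ← two_sum s]
        refine map_sum_lt s _ _ (fun a ha => ?_) k hk ?_
        · omega
        · omega
      exact ⟨hlt.le, ⟨fun he => absurd he hlt.ne, fun he => absurd he h⟩⟩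
  · intro m hm i hi1 hi2
    rw [ornDeg_eq s m i hi1 (by omega), ← two_sum s]
    refine map_sum_lt s _ _ (fun a ha => ?_) k hk ?_
    · omega
    · omega
end

section
/- Ratanang's theorem (recovery of the ordered string): let s and s' be ordered strings all of whose entries are positive, and let n be a positive integer exceeding every entry of s and of s'. If the arc multisets satisfy A(O_n(s)) = A(O_n(s')), then the multiset of odd-indexed entries of s equals the multiset of odd-indexed entries of s', and the multiset of even-indexed entries of s equals the multiset of even-indexed entries of s'. If in addition both s and s' have strictly increasing entries (a_1 < a_2 < … < a_l), then s = s'. -/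
/-- Multiset of entries of `s` at 1-based odd indices (0-based even positions). -/
def oddIdxEntries (s : List ℕ) : Multiset ℕ :=
  ↑(((List.range s.length).filter (fun t => t % 2 = 0)).map (fun t => s.getD t 0))

/-- Multiset of entries of `s` at 1-based even indices (0-based odd positions). -/
def evenIdxEntries (s : List ℕ) : Multiset ℕ :=
  ↑(((List.range s.length).filter (fun t => t % 2 = 1)).map (fun t => s.getD t 0))

private theorem aux_sum_ite (p : ℕ → Prop) [DecidablePred p] (L : List ℕ) :
    (L.map (fun t => if p t then 1 else 0)).sum = (L.filter (fun t => decide (p t))).length := by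
  induction L with
  | nil => simp
  | cons a L ih => by_cases h : p a <;> simp [h, ih, Nat.add_comm]

private theorem aux_count_fwd (s : List ℕ) (n k : ℕ) (hn : 0 < n) (hk : 1 ≤ k)
    (hkn : 1 + k ≤ n) :
    Multiset.count (1, 1 + k) (ornArcs s n) =
      Multiset.card ((oddIdxEntries s).filter (k ≤ ·)) := by
  rw [ornArcs]
  rw [show (Multiset.count (1, 1 + k) : Multiset (ℕ×ℕ) → ℕ) =
      Multiset.countAddMonoidHom (1,1+k) from (Multiset.coe_countAddMonoidHom _).symm,
    map_list_sum]
  rw [Multiset.coe_countAddMonoidHom]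
  simp only [Multiset.coe_countAddMonoidHom, List.map_map]
  have : ∀ t : ℕ, Multiset.count (1, 1 + k)
      (((Finset.Icc 1 n ×ˢ Finset.Icc 1 n).filter (fun p =>
      (t % 2 = 0 ∧ p.1 < p.2 ∧ p.2 ≤ p.1 + s.getD t 0) ∨
      (t % 2 = 1 ∧ p.2 < p.1 ∧ p.1 ≤ p.2 + s.getD t 0))).val) =
      if (t % 2 = 0 ∧ k ≤ s.getD t 0) then 1 else 0 := by
    intro t
    rw [Multiset.count_eq_of_nodup (Finset.nodup _)]
    have : ((1:ℕ), 1 + k) ∈ (Finset.Icc 1 n ×ˢ Finset.Icc 1 n).filter (fun p =>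
      (t % 2 = 0 ∧ p.1 < p.2 ∧ p.2 ≤ p.1 + s.getD t 0) ∨
      (t % 2 = 1 ∧ p.2 < p.1 ∧ p.1 ≤ p.2 + s.getD t 0)) ↔ (t % 2 = 0 ∧ k ≤ s.getD t 0) := by
      simp only [Finset.mem_filter, Finset.mem_product, Finset.mem_Icc]
      omega
    simp only [Finset.mem_val, this]
  simp only [Function.comp_def, this]
  rw [aux_sum_ite]
  rw [oddIdxEntries, Multiset.filter_coe, Multiset.coe_card, List.filter_map,
    List.filter_filter, List.length_map]
  congr 1
  apply List.filter_congr
  intro x _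
  simp only [Function.comp, decide_eq_true_eq, Bool.and_comm]
  rw [Bool.and_comm]
  simp [Bool.and_eq_true, decide_eq_true_eq]

private theorem aux_count_bwd (s : List ℕ) (n k : ℕ) (hn : 0 < n) (hk : 1 ≤ k)
    (hkn : 1 + k ≤ n) :
    Multiset.count (1 + k, 1) (ornArcs s n) =
      Multiset.card ((evenIdxEntries s).filter (k ≤ ·)) := by
  rw [ornArcs]
  rw [show (Multiset.count (1 + k, 1) : Multiset (ℕ×ℕ) → ℕ) =
      Multiset.countAddMonoidHom (1+k,1) from (Multiset.coe_countAddMonoidHom _).symm,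
    map_list_sum]
  rw [Multiset.coe_countAddMonoidHom]
  simp only [Multiset.coe_countAddMonoidHom, List.map_map]
  have : ∀ t : ℕ, Multiset.count (1 + k, 1)
      (((Finset.Icc 1 n ×ˢ Finset.Icc 1 n).filter (fun p =>
      (t % 2 = 0 ∧ p.1 < p.2 ∧ p.2 ≤ p.1 + s.getD t 0) ∨
      (t % 2 = 1 ∧ p.2 < p.1 ∧ p.1 ≤ p.2 + s.getD t 0))).val) =
      if (t % 2 = 1 ∧ k ≤ s.getD t 0) then 1 else 0 := by
    intro t
    rw [Multiset.count_eq_of_nodup (Finset.nodup _)]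
    have : ((1 + k : ℕ), (1:ℕ)) ∈ (Finset.Icc 1 n ×ˢ Finset.Icc 1 n).filter (fun p =>
      (t % 2 = 0 ∧ p.1 < p.2 ∧ p.2 ≤ p.1 + s.getD t 0) ∨
      (t % 2 = 1 ∧ p.2 < p.1 ∧ p.1 ≤ p.2 + s.getD t 0)) ↔ (t % 2 = 1 ∧ k ≤ s.getD t 0) := by
      simp only [Finset.mem_filter, Finset.mem_product, Finset.mem_Icc]
      omega
    simp only [Finset.mem_val, this]
  simp only [Function.comp_def, this]
  rw [aux_sum_ite]
  rw [evenIdxEntries, Multiset.filter_coe, Multiset.coe_card, List.filter_map,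
    List.filter_filter, List.length_map]
  congr 1
  apply List.filter_congr
  intro x _
  simp only [Function.comp, decide_eq_true_eq, Bool.and_comm]
  rw [Bool.and_comm]
  simp [Bool.and_eq_true, decide_eq_true_eq]

private theorem aux_key (a : ℕ) (N : Multiset ℕ) :
    Multiset.card (N.filter (a ≤ ·)) =
      Multiset.count a N + Multiset.card (N.filter (a + 1 ≤ ·)) := by
  have hcnt : Multiset.count a N = Multiset.card (N.filter (fun x => a = x)) :=
    Multiset.count_eq_card_filter_eq N a
  have hadd := Multiset.filter_add_filter (fun x => a = x) (fun x => a + 1 ≤ x) N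
  have h1 : N.filter (fun x => a = x ∨ a + 1 ≤ x) = N.filter (a ≤ ·) :=
    Multiset.filter_congr (fun x _ => by omega)
  have h2 : N.filter (fun x => a = x ∧ a + 1 ≤ x) = 0 := by
    rw [Multiset.filter_eq_nil]
    intro x _ hx
    omega
  rw [h1, h2] at hadd
  have := congrArg Multiset.card hadd
  simp only [Multiset.card_add, Multiset.card_zero] at this
  omega

private theorem aux_recover (n : ℕ) (M M' : Multiset ℕ)
    (hM : ∀ a ∈ M, 0 < a ∧ a < n) (hM' : ∀ a ∈ M', 0 < a ∧ a < n)
    (hF : ∀ k, 1 ≤ k → 1 + k ≤ n →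
      Multiset.card (M.filter (k ≤ ·)) = Multiset.card (M'.filter (k ≤ ·))) :
    M = M' := by
  have hF' : ∀ k, 1 ≤ k →
      Multiset.card (M.filter (k ≤ ·)) = Multiset.card (M'.filter (k ≤ ·)) := by
    intro k hk
    by_cases hkn : 1 + k ≤ n
    · exact hF k hk hkn
    · have e1 : M.filter (k ≤ ·) = 0 := by
        rw [Multiset.filter_eq_nil]
        intro a ha hk2
        have := hM a ha
        omega
      have e2 : M'.filter (k ≤ ·) = 0 := by
        rw [Multiset.filter_eq_nil]
        intro a ha hk2
        have := hM' a ha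
        omega
      rw [e1, e2]
  ext a
  by_cases ha : a = 0
  · subst ha
    rw [Multiset.count_eq_zero_of_notMem, Multiset.count_eq_zero_of_notMem]
    · intro hmem
      exact absurd (hM' 0 hmem).1 (lt_irrefl 0)
    · intro hmem
      exact absurd (hM 0 hmem).1 (lt_irrefl 0)
  · have ha1 : 1 ≤ a := Nat.one_le_iff_ne_zero.mpr ha
    have k1 := aux_key a M
    have k2 := aux_key a M'
    have e1 := hF' a ha1
    have e2 := hF' (a + 1) (by omega)
    omega

private theorem aux_mem (p : ℕ → Bool) {a : ℕ} {s : List ℕ}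
    (h : a ∈ (((List.range s.length).filter p).map (fun t => s.getD t 0))) : a ∈ s := by
  simp only [List.mem_map, List.mem_filter, List.mem_range] at h
  obtain ⟨t, ⟨ht, -⟩, rfl⟩ := h
  rw [List.getD_eq_getElem _ _ ht]
  exact List.getElem_mem ht

private theorem aux_map_range (s : List ℕ) :
    (List.range s.length).map (fun t => s.getD t 0) = s := by
  apply List.ext_getElem
  · simp
  · intro n h1 h2
    simp [List.getD_eq_getElem?_getD, List.getElem?_eq_getElem h2]

private theorem aux_split (s : List ℕ) :
    (↑s : Multiset ℕ) = oddIdxEntries s + evenIdxEntries s := by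
  rw [oddIdxEntries, evenIdxEntries]
  rw [← Multiset.map_coe, ← Multiset.map_coe, ← Multiset.filter_coe, ← Multiset.filter_coe,
    ← Multiset.map_add]
  have h2 : (Multiset.filter (fun t => t % 2 = 1) ↑(List.range s.length) : Multiset ℕ) =
      Multiset.filter (fun t => ¬ (t % 2 = 0)) ↑(List.range s.length) :=
    Multiset.filter_congr (fun x _ => by omega)
  rw [h2, Multiset.filter_add_not, Multiset.map_coe, aux_map_range]

/-- Ratanang's theorem (recovery of the ordered string): if two ordered strings with
all entries positive and below `n` define the same ornated graph `O_n`, then they have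
the same multiset of odd-indexed entries and the same multiset of even-indexed entries;
if moreover both strings are strictly increasing, they coincide. -/
theorem ratanang_theorem (s s' : List ℕ) (n : ℕ) (hn : 0 < n)
    (hs : ∀ a ∈ s, 0 < a) (hs' : ∀ a ∈ s', 0 < a)
    (hns : ∀ a ∈ s, a < n) (hns' : ∀ a ∈ s', a < n)
    (h : ornArcs s n = ornArcs s' n) :
    (oddIdxEntries s = oddIdxEntries s' ∧ evenIdxEntries s = evenIdxEntries s') ∧
    (s.Chain' (· < ·) → s'.Chain' (· < ·) → s = s') := by
  have hodd : oddIdxEntries s = oddIdxEntries s' := by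
    apply aux_recover n
    · intro a ha
      have hm : a ∈ s := aux_mem _ (by rwa [oddIdxEntries, Multiset.mem_coe] at ha)
      exact ⟨hs a hm, hns a hm⟩
    · intro a ha
      have hm : a ∈ s' := aux_mem _ (by rwa [oddIdxEntries, Multiset.mem_coe] at ha)
      exact ⟨hs' a hm, hns' a hm⟩
    · intro k hk hkn
      rw [← aux_count_fwd s n k hn hk hkn, ← aux_count_fwd s' n k hn hk hkn, h]
  have heven : evenIdxEntries s = evenIdxEntries s' := by
    apply aux_recover n
    · intro a ha
      have hm : a ∈ s := aux_mem _ (by rwa [evenIdxEntries, Multiset.mem_coe] at ha)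
      exact ⟨hs a hm, hns a hm⟩
    · intro a ha
      have hm : a ∈ s' := aux_mem _ (by rwa [evenIdxEntries, Multiset.mem_coe] at ha)
      exact ⟨hs' a hm, hns' a hm⟩
    · intro k hk hkn
      rw [← aux_count_bwd s n k hn hk hkn, ← aux_count_bwd s' n k hn hk hkn, h]
  refine ⟨⟨hodd, heven⟩, fun c c' => ?_⟩
  have hms : (↑s : Multiset ℕ) = ↑s' := by
    rw [aux_split s, aux_split s', hodd, heven]
  have hperm : s.Perm s' := Multiset.coe_eq_coe.mp hms
  haveI : IsAntisymm ℕ (· < ·) := ⟨fun a b h1 h2 => ((lt_asymm h1) h2).elim⟩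
  exact List.Perm.eq_of_pairwise'
    (List.isChain_iff_pairwise.mp c) (List.isChain_iff_pairwise.mp c') hperm
end
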